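/- arXiv:1808.03864 — 2 statements merged into one kernel-verified Lean document; each statement's English description precedes it below -/
import Mathlib

section
/- Let f be a nonzero homogeneous polynomial of degree d ≥ 3 in n complex variables. Let F = (1/d)∇f, F̄(x) = conj(F(conj(x))), and H = F̄ ∘ F. Then: (i) afix(F) = {x ∈ ℂ^n : F(x) = conj(x)} is contained in fix(H) = {x ∈ ℂ^n : H(x) = x}; (ii) x ∈ fix(H) if and only if there exists y ∈ ℂ^n with F(x) = y and F̄(y) = x; (iii) ‖f‖_{σ,ℂ} = max{ |f(x)| / ‖x‖₂^d : x ∈ fix(H) \ {0} }. -/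
open MvPolynomial

/-- The Euclidean (Hermitian) norm on `ℂⁿ`. -/
noncomputable def euclNorm {n : ℕ} (x : Fin n → ℂ) : ℝ :=
  Real.sqrt (∑ i, ‖x i‖ ^ 2)

/-- The complex spectral norm of `f`: the supremum of `|f(x)|` over the unit sphere of `ℂⁿ`. -/
noncomputable def specNorm {n : ℕ} (f : MvPolynomial (Fin n) ℂ) : ℝ :=
  sSup {r : ℝ | ∃ x : Fin n → ℂ, euclNorm x = 1 ∧ r = ‖eval x f‖}

/-- The map `F = (1/d)∇f : ℂⁿ → ℂⁿ`. -/
noncomputable def Fmap (d : ℕ) {n : ℕ} (f : MvPolynomial (Fin n) ℂ) (x : Fin n → ℂ) :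
    Fin n → ℂ :=
  fun i => (1 / (d : ℂ)) * eval x (pderiv i f)

/-- The map `F̄(x) = conj (F (conj x))`. -/
noncomputable def Fbar (d : ℕ) {n : ℕ} (f : MvPolynomial (Fin n) ℂ) (x : Fin n → ℂ) :
    Fin n → ℂ :=
  star (Fmap d f (star x))

/-- The map `H = F̄ ∘ F`. -/
noncomputable def Hmap (d : ℕ) {n : ℕ} (f : MvPolynomial (Fin n) ℂ) (x : Fin n → ℂ) :
    Fin n → ℂ :=
  Fbar d f (Fmap d f x)

/-! For (iii), let `x` maximise `|f|` on the unit sphere and put `a = f(x) ≠ 0`. By maximality and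
homogeneity, `Re (conj a * f y) - |a|² ‖y‖^d ≤ 0` with equality at `y = x`, so its derivative along
every line through `x` vanishes: this is the Lagrange condition `∇f(x) = d a conj(x)`, i.e.
`F(x) = a conj(x)`, whence `H(x) = a^(d-1) conj(a) x`. Since `H` is homogeneous of degree
`(d-1)² = d(d-2) + 1`, the multiple `t x` with `t^(d(d-2)) = (a^(d-1) conj(a))⁻¹` (possible as
`d ≥ 3`) is a fixed point of `H`, and it has the same ratio `|f| / ‖·‖^d` as `x`, namely the
spectral norm. -/

open ComplexConjugate

theorem Complex.eq_of_forall_re_mul_eq {a b : ℂ} (h : ∀ z, (a * z).re = (b * z).re) : a = b :=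
  Complex.ext (by simpa using h 1) (by simpa using h (-Complex.I))

namespace MvPolynomial

variable {σ R : Type*}

theorem IsHomogeneous.eval_smul [CommSemiring R] {φ : MvPolynomial σ R} {m : ℕ}
    (hφ : φ.IsHomogeneous m) (c : R) (x : σ → R) : eval (c • x) φ = c ^ m * eval x φ := by
  rw [eval_eq, eval_eq, Finset.mul_sum]
  refine Finset.sum_congr rfl fun s hs => ?_
  have hdeg : ∑ i ∈ s.support, s i = m := by
    by_contra h
    exact mem_support_iff.mp hs (hφ.coeff_eq_zero h)
  simp only [Pi.smul_apply, smul_eq_mul, mul_pow, Finset.prod_mul_distrib,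
    Finset.prod_pow_eq_pow_sum, hdeg]
  ring

theorem IsHomogeneous.eq_zero_of_isEmpty [CommSemiring R] [IsEmpty σ] {φ : MvPolynomial σ R}
    {m : ℕ} (hφ : φ.IsHomogeneous m) (hm : m ≠ 0) : φ = 0 := by
  ext s
  rw [Subsingleton.elim s 0, coeff_zero]
  exact hφ.coeff_eq_zero (by simpa using hm.symm)

theorem hasDerivAt_eval_add_smul [Fintype σ] (f : MvPolynomial σ ℂ) (x v : σ → ℂ) :
    HasDerivAt (fun t : ℝ => eval (x + t • v) f) (∑ i, eval x (pderiv i f) * v i) 0 := by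
  classical
  induction f using MvPolynomial.induction_on with
  | C a => simpa using hasDerivAt_const (0 : ℝ) a
  | add p q hp hq => simpa [add_mul, Finset.sum_add_distrib] using hp.fun_add hq
  | mul_X p j hp =>
    have hline : HasDerivAt (fun t : ℝ => x j + t • v j) (v j) 0 := by
      simpa using ((hasDerivAt_id (0 : ℝ)).smul_const (v j)).const_add (x j)
    have hprod : (fun t : ℝ => eval (x + t • v) (p * X j)) =
        fun t => eval (x + t • v) p * (x j + t • v j) := by
      funext t; simp
    rw [hprod]
    refine (hp.fun_mul hline).congr_deriv ?_
    simp only [zero_smul, add_zero, pderiv_mul, pderiv_X, Pi.single_apply, map_add, map_mul,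
      eval_X, apply_ite (eval x), map_zero, mul_ite, mul_one, mul_zero, add_mul,
      Finset.sum_add_distrib, ite_mul, zero_mul, Finset.sum_ite_eq, Finset.mem_univ, if_true,
      Finset.sum_mul, mul_right_comm _ (x j)]

end MvPolynomial

open MvPolynomial

section EuclideanNorm

variable {n : ℕ}

theorem euclNorm_eq_norm (x : Fin n → ℂ) :
    euclNorm x = ‖(WithLp.toLp 2 x : EuclideanSpace ℂ (Fin n))‖ :=
  (EuclideanSpace.norm_eq _).symm

theorem euclNorm_smul (c : ℂ) (x : Fin n → ℂ) : euclNorm (c • x) = ‖c‖ * euclNorm x := by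
  simp only [euclNorm_eq_norm, WithLp.toLp_smul, norm_smul]

theorem euclNorm_pos {x : Fin n → ℂ} (hx : x ≠ 0) : 0 < euclNorm x := by
  simpa [euclNorm_eq_norm] using hx

theorem ne_zero_of_euclNorm_eq_one {x : Fin n → ℂ} (hx : euclNorm x = 1) : x ≠ 0 := by
  rintro rfl
  simp [euclNorm_eq_norm] at hx

theorem exists_euclNorm_eq_one_forall_le (hn : n ≠ 0) {g : (Fin n → ℂ) → ℝ}
    (hg : Continuous g) : ∃ x, euclNorm x = 1 ∧ ∀ y, euclNorm y = 1 → g y ≤ g x := by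
  have : Nonempty (Fin n) := ⟨⟨0, Nat.pos_of_ne_zero hn⟩⟩
  obtain ⟨u, hu, hmax⟩ := (isCompact_sphere (0 : EuclideanSpace ℂ (Fin n)) 1).exists_isMaxOn
    (NormedSpace.sphere_nonempty.mpr zero_le_one)
    (hg.comp (PiLp.continuous_ofLp 2 _)).continuousOn
  refine ⟨u.ofLp, by simpa [euclNorm_eq_norm] using hu, fun y hy => ?_⟩
  exact hmax (show WithLp.toLp 2 y ∈ _ by simpa [euclNorm_eq_norm] using hy)

theorem hasDerivAt_euclNorm_add_smul {x : Fin n → ℂ} (hx : x ≠ 0) (v : Fin n → ℂ) :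
    HasDerivAt (fun t : ℝ => euclNorm (x + t • v))
      ((∑ i, conj (x i) * v i).re / euclNorm x) 0 := by
  have hsq : HasDerivAt (fun t : ℝ => ∑ i, ‖x i + t • v i‖ ^ 2)
      (∑ i, 2 * inner ℝ (x i) (v i)) 0 :=
    HasDerivAt.fun_sum fun i _ => by
      simpa using (((hasDerivAt_id (0 : ℝ)).smul_const (v i)).const_add (x i)).norm_sq
  have hne : ∑ i, ‖x i‖ ^ 2 ≠ 0 := (Real.sqrt_pos.mp (euclNorm_pos hx)).ne'
  refine (hsq.sqrt (by simpa using hne)).congr_deriv ?_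
  rw [← Finset.mul_sum, mul_div_mul_left _ _ two_ne_zero]
  simp [euclNorm, Complex.inner, Complex.re_sum, mul_comm]

end EuclideanNorm

section Homogeneous

variable {n d : ℕ} {f : MvPolynomial (Fin n) ℂ}

theorem Fmap_smul (hf : f.IsHomogeneous d) (c : ℂ) (x : Fin n → ℂ) :
    Fmap d f (c • x) = c ^ (d - 1) • Fmap d f x := by
  funext i
  simp only [Fmap, Pi.smul_apply, smul_eq_mul, hf.pderiv.eval_smul]
  ring

theorem Fbar_smul (hf : f.IsHomogeneous d) (c : ℂ) (y : Fin n → ℂ) :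
    Fbar d f (c • y) = c ^ (d - 1) • Fbar d f y := by
  simp only [Fbar, star_smul, Fmap_smul hf, star_pow, star_star]

theorem Hmap_smul (hf : f.IsHomogeneous d) (c : ℂ) (x : Fin n → ℂ) :
    Hmap d f (c • x) = c ^ ((d - 1) * (d - 1)) • Hmap d f x := by
  simp only [Hmap, Fmap_smul hf, Fbar_smul hf, ← pow_mul]

theorem Hmap_eq_smul_of_Fmap_eq_smul_star (hf : f.IsHomogeneous d) {a : ℂ} {x : Fin n → ℂ}
    (hx : Fmap d f x = a • star x) : Hmap d f x = (a ^ (d - 1) * conj a) • x := by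
  rw [Hmap, hx, Fbar_smul hf, Fbar, star_star, hx, star_smul, star_star, smul_smul]
  rfl

theorem exists_smul_Hmap_eq_self (hd : 3 ≤ d) (hf : f.IsHomogeneous d) {μ : ℂ} (hμ : μ ≠ 0)
    {x : Fin n → ℂ} (hx : Hmap d f x = μ • x) : ∃ t : ℂ, t ≠ 0 ∧ Hmap d f (t • x) = t • x := by
  have hk : 0 < d * (d - 2) := Nat.mul_pos (by omega) (by omega)
  obtain ⟨t, ht⟩ := IsAlgClosed.exists_pow_nat_eq μ⁻¹ hk
  have ht0 : t ≠ 0 := by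
    rintro rfl
    exact inv_ne_zero hμ (ht ▸ zero_pow hk.ne')
  have hexp : (d - 1) * (d - 1) = d * (d - 2) + 1 := by
    obtain ⟨k, rfl⟩ : ∃ k, d = k + 3 := ⟨d - 3, by omega⟩
    simp only [show k + 3 - 1 = k + 2 by omega, show k + 3 - 2 = k + 1 by omega]
    ring
  refine ⟨t, ht0, ?_⟩
  rw [Hmap_smul hf, hx, smul_smul, hexp, pow_succ, ht]
  field_simp

theorem norm_eval_smul_div (hf : f.IsHomogeneous d) {t : ℂ} (ht : t ≠ 0) (x : Fin n → ℂ) :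
    ‖eval (t • x) f‖ / euclNorm (t • x) ^ d = ‖eval x f‖ / euclNorm x ^ d := by
  rw [hf.eval_smul, euclNorm_smul, norm_mul, norm_pow, mul_pow,
    mul_div_mul_left _ _ (pow_ne_zero _ (norm_ne_zero_iff.mpr ht))]

theorem norm_eval_le_mul_euclNorm_pow (hd : d ≠ 0) (hf : f.IsHomogeneous d) {M : ℝ}
    (hM : ∀ u, euclNorm u = 1 → ‖eval u f‖ ≤ M) (y : Fin n → ℂ) :
    ‖eval y f‖ ≤ M * euclNorm y ^ d := by
  rcases eq_or_ne y 0 with rfl | hy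
  · have : eval 0 f = 0 := by simpa [zero_pow hd] using hf.eval_smul 0 0
    rw [this, norm_zero]
    simp [euclNorm_eq_norm, zero_pow hd]
  have hpos := euclNorm_pos hy
  have hu : euclNorm ((euclNorm y : ℂ)⁻¹ • y) = 1 := by
    rw [euclNorm_smul, norm_inv, Complex.norm_real, Real.norm_of_nonneg hpos.le,
      inv_mul_cancel₀ hpos.ne']
  have hratio := norm_eval_smul_div hf (t := (euclNorm y : ℂ)⁻¹) (by simpa using hpos.ne') y
  rw [hu, one_pow, div_one] at hratio
  rw [← div_le_iff₀ (pow_pos hpos d), ← hratio]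
  exact hM _ hu

end Homogeneous

theorem eval_pderiv_eq_of_norm_eval_le {n d : ℕ} {f : MvPolynomial (Fin n) ℂ} {x : Fin n → ℂ}
    (hx : euclNorm x = 1) (hfx : eval x f ≠ 0)
    (hle : ∀ y, ‖eval y f‖ ≤ ‖eval x f‖ * euclNorm y ^ d) (j : Fin n) :
    eval x (pderiv j f) = d * eval x f * conj (x j) := by
  set a := eval x f
  refine mul_left_cancel₀ ((map_ne_zero (starRingEnd ℂ)).mpr hfx)
    (Complex.eq_of_forall_re_mul_eq fun z => ?_)
  set v : Fin n → ℂ := Pi.single j z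
  let φ : ℝ → ℝ := fun t =>
    (conj a * eval (x + t • v) f).re - ‖a‖ ^ 2 * euclNorm (x + t • v) ^ d
  have hφ0 : φ 0 = 0 := by simp [φ, a, hx, Complex.sq_norm, Complex.normSq_apply]
  have hmax : IsLocalMax φ 0 := Filter.Eventually.of_forall fun t => by
    have hre : (conj a * eval (x + t • v) f).re ≤ ‖a‖ * ‖eval (x + t • v) f‖ :=
      (Complex.re_le_norm _).trans (by simp)
    nlinarith [hle (x + t • v), norm_nonneg a]
  have hderiv := hmax.hasDerivAt_eq_zero <|
    (Complex.reCLM.hasFDerivAt.comp_hasDerivAt 0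
      ((hasDerivAt_eval_add_smul f x v).const_mul (conj a))).sub
    (((hasDerivAt_euclNorm_add_smul (ne_zero_of_euclNorm_eq_one hx) v).pow d).const_mul
      (‖a‖ ^ 2))
  simp only [Complex.reCLM_apply, zero_smul, add_zero, hx, one_pow, mul_one, div_one, v,
    Pi.single_apply, mul_ite, mul_zero, Finset.sum_ite_eq', Finset.mem_univ, if_true] at hderiv
  have hrhs : conj a * (d * a * conj (x j)) * z =
      ((‖a‖ ^ 2 * d : ℝ) : ℂ) * (conj (x j) * z) := by
    push_cast
    rw [← Complex.conj_mul']
    ring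
  rw [hrhs, Complex.re_ofReal_mul, mul_assoc (conj a)]
  linarith

theorem Fmap_eq_smul_star_of_norm_eval_le {n d : ℕ} (hd : d ≠ 0) {f : MvPolynomial (Fin n) ℂ}
    {x : Fin n → ℂ} (hx : euclNorm x = 1) (hfx : eval x f ≠ 0)
    (hle : ∀ y, ‖eval y f‖ ≤ ‖eval x f‖ * euclNorm y ^ d) :
    Fmap d f x = eval x f • star x := by
  funext j
  rw [Fmap, eval_pderiv_eq_of_norm_eval_le hx hfx hle j]
  field_simp
  rfl

theorem specNorm_eq_of_forall_le {n : ℕ} {f : MvPolynomial (Fin n) ℂ} {x : Fin n → ℂ}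
    (hx : euclNorm x = 1) (hmax : ∀ y, euclNorm y = 1 → ‖eval y f‖ ≤ ‖eval x f‖) :
    specNorm f = ‖eval x f‖ :=
  IsGreatest.csSup_eq ⟨⟨x, hx, rfl⟩, by rintro r ⟨y, hy, rfl⟩; exact hmax y hy⟩

/-- For a nonzero homogeneous `f` of degree `d ≥ 3`: anti-fixed points of `F` are fixed points
of `H`; fixed points of `H` are exactly the solutions of the coupled system `F(x) = y`,
`F̄(y) = x`; and the complex spectral norm of `f` is the maximum of `|f(x)|/‖x‖₂^d` over the
nonzero fixed points of `H`. -/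
theorem stmt5 {n d : ℕ} (hd : 3 ≤ d) (f : MvPolynomial (Fin n) ℂ) (hf : f ≠ 0)
    (hhom : f.IsHomogeneous d) :
    (∀ x : Fin n → ℂ, Fmap d f x = star x → Hmap d f x = x) ∧
    (∀ x : Fin n → ℂ, Hmap d f x = x ↔ ∃ y : Fin n → ℂ, Fmap d f x = y ∧ Fbar d f y = x) ∧
    IsGreatest {r : ℝ | ∃ x : Fin n → ℂ, x ≠ 0 ∧ Hmap d f x = x ∧
        r = ‖eval x f‖ / euclNorm x ^ d}
      (specNorm f) := by
  refine ⟨fun x hx => ?_, fun x => ⟨fun h => ⟨_, rfl, h⟩, fun ⟨_, hy, h⟩ => by rwa [Hmap, hy]⟩,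
    ?_⟩
  · simpa using Hmap_eq_smul_of_Fmap_eq_smul_star hhom (a := 1) (by simpa using hx)
  have hn : n ≠ 0 := by
    rintro rfl
    exact hf (hhom.eq_zero_of_isEmpty (by omega))
  obtain ⟨x, hx, hmax⟩ :=
    exists_euclNorm_eq_one_forall_le hn (continuous_norm.comp (continuous_eval f))
  have hbound := norm_eval_le_mul_euclNorm_pow (by omega) hhom hmax
  have hfx : eval x f ≠ 0 := fun h0 =>
    hf (MvPolynomial.funext fun y => by simpa [h0] using hbound y)
  have hH := Hmap_eq_smul_of_Fmap_eq_smul_star hhom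
    (Fmap_eq_smul_star_of_norm_eval_le (by omega) hx hfx hbound)
  obtain ⟨t, ht, hfix⟩ := exists_smul_Hmap_eq_self hd hhom (by simp [hfx]) hH
  rw [specNorm_eq_of_forall_le hx hmax]
  refine ⟨⟨t • x, smul_ne_zero ht (ne_zero_of_euclNorm_eq_one hx), hfix, ?_⟩, ?_⟩
  · rw [norm_eval_smul_div hhom ht, hx, one_pow, div_one]
  rintro r ⟨y, hy, -, rfl⟩
  rw [div_le_iff₀ (pow_pos (euclNorm_pos hy) d)]
  exact hbound y
end

section
/- Let A = [A_{ij}] be a nonzero symmetric n×n matrix with entries in {0,1} and zero diagonal, and let f_A(x) = Σ_{i,j=1}^n A_{ij} x_i² x_j². Let G be the simple graph on vertex set {1,…,n} whose adjacency matrix is A, and let κ(A) be the clique number of G (the maximal cardinality of a clique). Then κ(A) ∈ {1,…,n} and max{ f_A(x) : x ∈ ℝ^n, ‖x‖₂ = 1 } = max{ |f_A(x)| : x ∈ ℂ^n, ‖x‖₂ = 1 } = 1 − 1/κ(A). -/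
/-- The Euclidean norm on `ℝⁿ`. -/
noncomputable def euclNormR {n : ℕ} (x : Fin n → ℝ) : ℝ :=
  Real.sqrt (∑ i, x i ^ 2)

open Finset Matrix

namespace SimpleGraph

variable {V α : Type*} (G : SimpleGraph V)

theorem one_le_cliqueNum [Finite V] [Nonempty V] : 1 ≤ G.cliqueNum := by
  have hv : G.IsClique (({Classical.arbitrary V} : Finset V) : Set V) := by simp
  simpa using hv.card_le_cliqueNum

theorem cliqueNum_le_card [Fintype V] : G.cliqueNum ≤ Fintype.card V := by
  obtain ⟨t, ht⟩ := G.exists_isNClique_cliqueNum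
  exact ht.card_eq ▸ card_le_univ t

theorem adjMatrix_eq_of_adj_iff [DecidableRel G.Adj] [Zero α] [One α] [NeZero (1 : α)]
    {A : Matrix V V α} (h01 : ∀ i j, A i j = 0 ∨ A i j = 1) (hG : ∀ i j, G.Adj i j ↔ A i j = 1) :
    G.adjMatrix α = A := by
  ext i j
  rcases h01 i j with h | h <;> simp [hG, h]

section Fintype

variable [Fintype V] [DecidableEq V] [DecidableRel G.Adj] [CommRing α]

theorem adjMatrix_mulVec_apply_of_isClique {s : Finset V} (hs : G.IsClique (s : Set V))
    {y : V → α} (hy : ∀ j ∉ s, y j = 0) {i : V} (hi : i ∈ s) :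
    (G.adjMatrix α *ᵥ y) i = ∑ j, y j - y i := by
  rw [adjMatrix_mulVec_apply, ← sum_erase_eq_sub (mem_univ i)]
  refine sum_subset (fun j hj => ?_) (fun j hj hjN => hy j fun hjs => hjN ?_)
  · simpa using ((G.mem_neighborFinset i j).1 hj).ne.symm
  · exact (G.mem_neighborFinset i j).2 (hs hi hjs (ne_of_mem_erase hj).symm)

theorem dotProduct_adjMatrix_mulVec_of_isClique {s : Finset V} (hs : G.IsClique (s : Set V))
    {y : V → α} (hy : ∀ j ∉ s, y j = 0) :
    y ⬝ᵥ G.adjMatrix α *ᵥ y = (∑ i, y i) ^ 2 - ∑ i, y i ^ 2 := by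
  have hterm : ∀ i, y i * (G.adjMatrix α *ᵥ y) i = y i * (∑ j, y j - y i) := fun i => by
    by_cases hi : i ∈ s
    · rw [G.adjMatrix_mulVec_apply_of_isClique hs hy hi]
    · simp [hy i hi]
  simp only [dotProduct, hterm, mul_sub, sum_sub_distrib, ← sum_mul, sq]

theorem dotProduct_adjMatrix_mulVec_add_smul {a b : V} (hab : ¬G.Adj a b) (y : V → α)
    (t : α) :
    (y + t • (Pi.single a 1 - Pi.single b 1)) ⬝ᵥ G.adjMatrix α *ᵥ
        (y + t • (Pi.single a 1 - Pi.single b 1)) =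
      y ⬝ᵥ G.adjMatrix α *ᵥ y + 2 * t * ((G.adjMatrix α *ᵥ y) a - (G.adjMatrix α *ᵥ y) b) := by
  have hsymm : ∀ v w : V → α, v ⬝ᵥ G.adjMatrix α *ᵥ w = w ⬝ᵥ G.adjMatrix α *ᵥ v :=
    fun v w => by
    rw [dotProduct_mulVec, ← mulVec_transpose, transpose_adjMatrix, dotProduct_comm]
  have hcol : ∀ v, y ⬝ᵥ (G.adjMatrix α).col v = (G.adjMatrix α *ᵥ y) v := fun v => by
    rw [← mulVec_single_one, hsymm, single_one_dotProduct]
  simp only [mulVec_add, mulVec_smul, mulVec_sub, mulVec_single_one, dotProduct_add,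
    add_dotProduct, smul_dotProduct, dotProduct_smul, sub_dotProduct, dotProduct_sub, hsymm _ y,
    single_dotProduct, hcol]
  simp [hab, G.adj_comm b a]
  ring

theorem dotProduct_adjMatrix_mulVec_le_of_isClique {s : Finset V} (hs : G.IsClique (s : Set V))
    {y : V → ℝ} (hy : ∀ j ∉ s, y j = 0) (hsum : ∑ i, y i = 1) :
    y ⬝ᵥ G.adjMatrix ℝ *ᵥ y ≤ 1 - 1 / G.cliqueNum := by
  have hsum_s : ∑ i ∈ s, y i = 1 := by rwa [sum_subset (subset_univ s) fun i _ hi => hy i hi]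
  have hsq_s : ∑ i, y i ^ 2 = ∑ i ∈ s, y i ^ 2 :=
    (sum_subset (subset_univ s) fun i _ hi => by simp [hy i hi]).symm
  have hcard : 0 < #s := card_pos.2 (nonempty_of_sum_ne_zero (hsum_s ▸ one_ne_zero))
  have hcs : 1 ≤ #s * ∑ i ∈ s, y i ^ 2 := by
    simpa [hsum_s] using sq_sum_le_card_mul_sum_sq (s := s) (f := y)
  calc y ⬝ᵥ G.adjMatrix ℝ *ᵥ y = 1 - ∑ i ∈ s, y i ^ 2 := by
        rw [G.dotProduct_adjMatrix_mulVec_of_isClique hs hy, hsum, hsq_s, one_pow]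
    _ ≤ 1 - 1 / #s := by
        gcongr
        rw [div_le_iff₀ (by exact_mod_cast hcard)]
        linarith
    _ ≤ 1 - 1 / G.cliqueNum := by
        gcongr
        exact hs.card_le_cliqueNum

theorem dotProduct_adjMatrix_mulVec_le {y : V → ℝ} (hy : y ∈ stdSimplex ℝ V) :
    y ⬝ᵥ G.adjMatrix ℝ *ᵥ y ≤ 1 - 1 / G.cliqueNum := by
  suffices ∀ s : Finset V, ∀ y ∈ stdSimplex ℝ V, (∀ j ∉ s, y j = 0) →
      y ⬝ᵥ G.adjMatrix ℝ *ᵥ y ≤ 1 - 1 / G.cliqueNum from this univ y hy (by simp)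
  intro s
  induction s using Finset.strongInduction with | H s ih => ?_
  intro y hy hys
  by_cases hs : G.IsClique (s : Set V)
  · exact G.dotProduct_adjMatrix_mulVec_le_of_isClique hs hys hy.2
  obtain ⟨a, ha, b, hb, hab, hnadj⟩ : ∃ a ∈ s, ∃ b ∈ s, a ≠ b ∧ ¬G.Adj a b := by
    simpa [IsClique, Set.Pairwise] using hs
  wlog hle : (G.adjMatrix ℝ *ᵥ y) b ≤ (G.adjMatrix ℝ *ᵥ y) a generalizing a b
  · exact this b hb a ha hab.symm (fun h => hnadj h.symm) (le_of_not_ge hle)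
  set y' := y + y b • (Pi.single a 1 - Pi.single b 1 : V → ℝ)
  have hy'a : y' a = y a + y b := by simp [y', hab]
  have hy'b : y' b = 0 := by simp [y', hab.symm]
  have hy'i : ∀ i, i ≠ a → i ≠ b → y' i = y i := fun i hia hib => by simp [y', hia, hib]
  have hy' : y' ∈ stdSimplex ℝ V := by
    refine ⟨fun i => ?_, by simp [y', sum_add_distrib, ← mul_sum, hy.2]⟩
    by_cases hia : i = a
    · simpa [hia, hy'a] using add_nonneg (hy.1 a) (hy.1 b)
    by_cases hib : i = b
    · simp [hib, hy'b]
    · simpa [hy'i i hia hib] using hy.1 i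
  have hy's : ∀ j ∉ s.erase b, y' j = 0 := by
    intro j hj
    by_cases hjb : j = b
    · rw [hjb, hy'b]
    have hjs : j ∉ s := fun hjs => hj (mem_erase.2 ⟨hjb, hjs⟩)
    rw [hy'i j (ne_of_mem_of_not_mem ha hjs).symm hjb, hys j hjs]
  calc y ⬝ᵥ G.adjMatrix ℝ *ᵥ y ≤ y' ⬝ᵥ G.adjMatrix ℝ *ᵥ y' := by
        rw [G.dotProduct_adjMatrix_mulVec_add_smul hnadj]
        nlinarith [hy.1 b]
    _ ≤ 1 - 1 / G.cliqueNum := ih _ (erase_ssubset hb) y' hy' hy's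

theorem exists_mem_stdSimplex_dotProduct_adjMatrix_mulVec_eq [Nonempty V] :
    ∃ y ∈ stdSimplex ℝ V, y ⬝ᵥ G.adjMatrix ℝ *ᵥ y = 1 - 1 / G.cliqueNum := by
  obtain ⟨t, ht⟩ := G.exists_isNClique_cliqueNum
  have hκ : (G.cliqueNum : ℝ) ≠ 0 := by
    exact_mod_cast Nat.one_le_iff_ne_zero.1 G.one_le_cliqueNum
  set y : V → ℝ := fun i => if i ∈ t then (G.cliqueNum : ℝ)⁻¹ else 0
  have hsum : ∑ i, y i = 1 := by simp [y, ht.card_eq, hκ]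
  refine ⟨y, ⟨fun i => by positivity, hsum⟩, ?_⟩
  rw [G.dotProduct_adjMatrix_mulVec_of_isClique ht.isClique (fun j hj => if_neg hj), hsum]
  simp [ht.card_eq]
  field_simp

theorem isGreatest_dotProduct_adjMatrix_mulVec [Nonempty V] :
    IsGreatest ((fun y => y ⬝ᵥ G.adjMatrix ℝ *ᵥ y) '' stdSimplex ℝ V)
      (1 - 1 / G.cliqueNum) := by
  obtain ⟨y, hy, hval⟩ := G.exists_mem_stdSimplex_dotProduct_adjMatrix_mulVec_eq
  exact ⟨⟨y, hy, hval⟩, Set.forall_mem_image.2 fun _ hy => G.dotProduct_adjMatrix_mulVec_le hy⟩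

end Fintype

end SimpleGraph

theorem Matrix.sum_sum_mul_mul_eq_dotProduct_mulVec {ι R : Type*} [Fintype ι] [CommSemiring R]
    (A : Matrix ι ι R) (y : ι → R) : ∑ i, ∑ j, A i j * y i * y j = y ⬝ᵥ A *ᵥ y := by
  simp only [dotProduct, mulVec, mul_sum]
  exact sum_congr rfl fun i _ => sum_congr rfl fun j _ => by ring

theorem euclNormR_eq_one_iff {n : ℕ} (x : Fin n → ℝ) :
    euclNormR x = 1 ↔ (fun i => x i ^ 2) ∈ stdSimplex ℝ (Fin n) := by
  simp [euclNormR, stdSimplex, sq_nonneg]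

theorem euclNorm_eq_one_iff {n : ℕ} (z : Fin n → ℂ) :
    euclNorm z = 1 ↔ (fun i => ‖z i‖ ^ 2) ∈ stdSimplex ℝ (Fin n) := by
  simp [euclNorm, stdSimplex]

theorem isGreatest_sum_sum_mul_sq_mul_sq_of_stdSimplex {n : ℕ}
    {A : Matrix (Fin n) (Fin n) ℝ} {c : ℝ}
    (h : IsGreatest ((fun y => y ⬝ᵥ A *ᵥ y) '' stdSimplex ℝ (Fin n)) c) :
    IsGreatest {r : ℝ | ∃ x : Fin n → ℝ, euclNormR x = 1 ∧
      r = ∑ i, ∑ j, A i j * x i ^ 2 * x j ^ 2} c := by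
  obtain ⟨⟨y, hy, rfl⟩, hub⟩ := h
  have hsq : (fun i => Real.sqrt (y i) ^ 2) = y := funext fun i => Real.sq_sqrt (hy.1 i)
  refine ⟨⟨fun i => Real.sqrt (y i), by rw [euclNormR_eq_one_iff, hsq]; exact hy, ?_⟩, ?_⟩
  · rw [sum_sum_mul_mul_eq_dotProduct_mulVec A (fun i => Real.sqrt (y i) ^ 2), hsq]
  · rintro _ ⟨x, hx, rfl⟩
    rw [sum_sum_mul_mul_eq_dotProduct_mulVec A (fun i => x i ^ 2)]
    exact hub ⟨_, (euclNormR_eq_one_iff x).1 hx, rfl⟩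

theorem isGreatest_norm_sum_sum_mul_sq_mul_sq_of_stdSimplex {n : ℕ}
    {A : Matrix (Fin n) (Fin n) ℝ} (hA : ∀ i j, 0 ≤ A i j) {c : ℝ}
    (h : IsGreatest ((fun y => y ⬝ᵥ A *ᵥ y) '' stdSimplex ℝ (Fin n)) c) :
    IsGreatest {r : ℝ | ∃ z : Fin n → ℂ, euclNorm z = 1 ∧
      r = ‖(∑ i, ∑ j, (A i j : ℂ) * z i ^ 2 * z j ^ 2)‖} c := by
  obtain ⟨⟨y, hy, rfl⟩, hub⟩ := h
  have hsq : ∀ i, (Real.sqrt (y i) : ℂ) ^ 2 = y i := fun i => by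
    rw [← Complex.ofReal_pow, Real.sq_sqrt (hy.1 i)]
  have hnorm : (fun i => ‖(Real.sqrt (y i) : ℂ)‖ ^ 2) = y := funext fun i => by
    rw [← norm_pow, hsq, Complex.norm_real, Real.norm_of_nonneg (hy.1 i)]
  refine ⟨⟨fun i => (Real.sqrt (y i) : ℂ), by rw [euclNorm_eq_one_iff, hnorm]; exact hy, ?_⟩, ?_⟩
  · have hval : 0 ≤ ∑ i, ∑ j, A i j * y i * y j :=
      sum_nonneg fun i _ => sum_nonneg fun j _ => mul_nonneg (mul_nonneg (hA i j) (hy.1 i)) (hy.1 j)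
    simp only [hsq]
    rw [← sum_sum_mul_mul_eq_dotProduct_mulVec]
    simp only [← Complex.ofReal_mul, ← Complex.ofReal_sum, Complex.norm_real,
      Real.norm_of_nonneg hval]
  · rintro _ ⟨z, hz, rfl⟩
    calc ‖∑ i, ∑ j, (A i j : ℂ) * z i ^ 2 * z j ^ 2‖
        ≤ ∑ i, ∑ j, A i j * ‖z i‖ ^ 2 * ‖z j‖ ^ 2 := by
          refine (norm_sum_le _ _).trans (sum_le_sum fun i _ => (norm_sum_le _ _).trans_eq ?_)
          simp [abs_of_nonneg (hA _ _)]
      _ ≤ y ⬝ᵥ A *ᵥ y := by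
          rw [sum_sum_mul_mul_eq_dotProduct_mulVec A (fun i => ‖z i‖ ^ 2)]
          exact hub ⟨_, (euclNorm_eq_one_iff z).1 hz, rfl⟩

theorem stmt19_general {n : ℕ} (A : Matrix (Fin n) (Fin n) ℝ) (hA0 : A ≠ 0)
    (h01 : ∀ i j, A i j = 0 ∨ A i j = 1)
    (G : SimpleGraph (Fin n)) (hG : ∀ i j, G.Adj i j ↔ A i j = 1)
    (κ : ℕ) (hκ : IsGreatest {k : ℕ | ∃ t : Finset (Fin n), G.IsNClique k t} κ) :
    1 ≤ κ ∧ κ ≤ n ∧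
    IsGreatest {r : ℝ | ∃ x : Fin n → ℝ, euclNormR x = 1 ∧
        r = ∑ i, ∑ j, A i j * x i ^ 2 * x j ^ 2}
      (1 - 1 / (κ : ℝ)) ∧
    IsGreatest {r : ℝ | ∃ x : Fin n → ℂ, euclNorm x = 1 ∧
        r = ‖(∑ i, ∑ j, (A i j : ℂ) * x i ^ 2 * x j ^ 2)‖}
      (1 - 1 / (κ : ℝ)) := by
  classical
  have hκ' : G.cliqueNum = κ := hκ.csSup_eq
  have : Nonempty (Fin n) := by
    obtain ⟨i, -, -⟩ : ∃ i j, A i j ≠ 0 := by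
      by_contra! h
      exact hA0 (Matrix.ext h)
    exact ⟨i⟩
  have hMS := G.isGreatest_dotProduct_adjMatrix_mulVec
  rw [G.adjMatrix_eq_of_adj_iff h01 hG, hκ'] at hMS
  have hA : ∀ i j, 0 ≤ A i j := fun i j => by rcases h01 i j with h | h <;> simp [h]
  exact ⟨hκ' ▸ G.one_le_cliqueNum, hκ' ▸ G.cliqueNum_le_card.trans_eq (Fintype.card_fin n),
    isGreatest_sum_sum_mul_sq_mul_sq_of_stdSimplex hMS,
    isGreatest_norm_sum_sum_mul_sq_mul_sq_of_stdSimplex hA hMS⟩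

/-- Motzkin–Straus: for a nonzero symmetric 0/1 matrix `A` with zero diagonal, adjacency
matrix of a graph `G` with clique number `κ`, one has `κ ∈ [n]` and both the real and complex
spectral maxima of `f_A(x) = Σ_{i,j} A_{ij} x_i² x_j²` over the unit sphere equal
`1 - 1/κ`. -/
theorem stmt19 {n : ℕ} (A : Matrix (Fin n) (Fin n) ℝ) (hA0 : A ≠ 0)
    (hsym : A.IsSymm) (h01 : ∀ i j, A i j = 0 ∨ A i j = 1) (hdiag : ∀ i, A i i = 0)
    (G : SimpleGraph (Fin n)) (hG : ∀ i j, G.Adj i j ↔ A i j = 1)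
    (κ : ℕ) (hκ : IsGreatest {k : ℕ | ∃ t : Finset (Fin n), G.IsNClique k t} κ) :
    1 ≤ κ ∧ κ ≤ n ∧
    IsGreatest {r : ℝ | ∃ x : Fin n → ℝ, euclNormR x = 1 ∧
        r = ∑ i, ∑ j, A i j * x i ^ 2 * x j ^ 2}
      (1 - 1 / (κ : ℝ)) ∧
    IsGreatest {r : ℝ | ∃ x : Fin n → ℂ, euclNorm x = 1 ∧
        r = ‖(∑ i, ∑ j, (A i j : ℂ) * x i ^ 2 * x j ^ 2)‖}
      (1 - 1 / (κ : ℝ)) :=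
  stmt19_general A hA0 h01 G hG κ hκ
end
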